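/- Let G be a finite group and B a ℤ_pG-module, free of finite rank over ℤ_p, and let e := exp H^m(G,B). Then the map H^m(G, e·B) → H^m(G, B) induced by the inclusion e·B ↪ B is the zero map. -/

import Mathlib

namespace GroupCoh

variable (G : Type) [Group G] (M : Type) [AddCommGroup M] [DistribMulAction G M]

/-- Coboundary map on inhomogeneous cochains. -/
def d (m : ℕ) : ((Fin m → G) → M) →+ ((Fin (m + 1) → G) → M) where
  toFun c := fun g => g 0 • c (fun i => g i.succ) +
    ∑ j : Fin (m + 1), ((-1 : ℤ) ^ ((j : ℕ) + 1)) • c (Fin.contractNth j (· * ·) g)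
  map_zero' := by funext g; simp
  map_add' c₁ c₂ := by
    funext g
    simp only [Pi.add_apply, smul_add, Finset.sum_add_distrib]
    abel

/-- Cocycles. -/
def Zc (m : ℕ) : AddSubgroup ((Fin m → G) → M) := (d G M m).ker

/-- Coboundaries. -/
def Bc : (m : ℕ) → AddSubgroup ((Fin m → G) → M)
  | 0 => ⊥
  | (m + 1) => (d G M m).range

/-- Cohomology. -/
def H (m : ℕ) : Type := Zc G M m ⧸ ((Bc G M m).addSubgroupOf (Zc G M m))

noncomputable instance (m : ℕ) : AddCommGroup (H G M m) :=
  QuotientAddGroup.Quotient.addCommGroup _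

/-- Class of a cocycle. -/
def mkH (m : ℕ) (c : (Fin m → G) → M) (hc : c ∈ Zc G M m) : H G M m :=
  QuotientAddGroup.mk ⟨c, hc⟩

end GroupCoh

/-!
Write the cocycle as `c = e • b`. If `e = 0` then `c = 0`. Otherwise `e • ·` is injective on `B`,
a free module over the characteristic-zero domain `ℤ_p`, and commutes with `d`, so `b` is itself
a cocycle; its class is killed by `e = exp H^m(G, B)`, hence `c = e • b` is a coboundary.
-/

namespace GroupCoh

variable {G : Type} [Group G] {M : Type} [AddCommGroup M] [DistribMulAction G M] {m : ℕ}

theorem mkH_eq_zero_iff {c : (Fin m → G) → M} (hc : c ∈ Zc G M m) :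
    mkH G M m c hc = 0 ↔ c ∈ Bc G M m :=
  QuotientAddGroup.eq_zero_iff _

theorem exponent_nsmul_mem_Bc {b : (Fin m → G) → M} (hb : b ∈ Zc G M m) :
    AddMonoid.exponent (H G M m) • b ∈ Bc G M m := by
  have hnb : AddMonoid.exponent (H G M m) • b ∈ Zc G M m := (Zc G M m).nsmul_mem hb _
  rw [← mkH_eq_zero_iff hnb]
  exact AddMonoid.exponent_nsmul_eq_zero (mkH G M m b hb)

theorem mem_Zc_of_nsmul_mem [IsAddTorsionFree M] {n : ℕ} (hn : n ≠ 0)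
    {b : (Fin m → G) → M} (hnb : n • b ∈ Zc G M m) : b ∈ Zc G M m := by
  have hd : n • d G M m b = 0 := by rw [← map_nsmul]; exact hnb
  exact IsAddTorsionFree.nsmul_right_injective hn (hd.trans (nsmul_zero n).symm)

theorem mem_Bc_of_forall_eq_exponent_nsmul [IsAddTorsionFree M] {c : (Fin m → G) → M}
    (hc : c ∈ Zc G M m)
    (hval : ∀ x : Fin m → G, ∃ b : M, c x = AddMonoid.exponent (H G M m) • b) :
    c ∈ Bc G M m := by
  set e := AddMonoid.exponent (H G M m)
  choose b hb using hval
  have hcb : c = e • b := funext hb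
  rcases eq_or_ne e 0 with he | he
  · rw [hcb, he, zero_smul]
    exact (Bc G M m).zero_mem
  · rw [hcb] at hc ⊢
    exact exponent_nsmul_mem_Bc (mem_Zc_of_nsmul_mem he hc)

end GroupCoh

open GroupCoh

theorem map_from_smul_submodule_cohomology_eq_zero_general (p : ℕ) [Fact p.Prime]
    (G : Type) [Group G]
    (B : Type) [AddCommGroup B] [Module (PadicInt p) B] [DistribMulAction G B]
    [Module.Free (PadicInt p) B]
    (m : ℕ) (e : ℕ) (he : e = AddMonoid.exponent (H G B m))
    (c : (Fin m → G) → B) (hc : c ∈ Zc G B m)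
    (hval : ∀ x : Fin m → G, ∃ b : B, c x = e • b) :
    c ∈ Bc G B m := by
  have : IsAddTorsionFree B := .of_isTorsionFree (PadicInt p) B
  subst he
  exact mem_Bc_of_forall_eq_exponent_nsmul hc hval

/-- Let `G` be a finite group, `B` a `ℤ_p G`-module free of finite rank over `ℤ_p`, and
`e := exp H^m(G, B)`. Then the map `H^m(G, e·B) → H^m(G, B)` induced by the inclusion
`e·B ↪ B` is the zero map; equivalently, every `m`-cocycle of `G` with values in the
submodule `e·B` is an `m`-coboundary of `G` with values in `B`. -/
theorem map_from_smul_submodule_cohomology_eq_zero (p : ℕ) [Fact p.Prime]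
    (G : Type) [Group G] [Fintype G]
    (B : Type) [AddCommGroup B] [Module (PadicInt p) B] [DistribMulAction G B]
    [SMulCommClass G (PadicInt p) B]
    [Module.Free (PadicInt p) B] [Module.Finite (PadicInt p) B]
    (m : ℕ) (e : ℕ) (he : e = AddMonoid.exponent (H G B m))
    (c : (Fin m → G) → B) (hc : c ∈ Zc G B m)
    (hval : ∀ x : Fin m → G, ∃ b : B, c x = e • b) :
    c ∈ Bc G B m :=
  map_from_smul_submodule_cohomology_eq_zero_general p G B m e he c hc hval
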